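/- Suppose f is Lipschitz continuous with constant M₁ with respect to the Frobenius norm. Let X ∈ ℝ^{n×p} satisfy ‖XᵀX − I_p‖_F ≤ 1/6 (so XᵀX is positive definite and P(X) is defined). Then h(P(X)) ≤ h(X) − (β/4 − M₁/2)·‖XᵀX − I_p‖_F². -/

import Mathlib

/-!
Everything is a function of `A = XᵀX`. Each eigenvalue `μ` of `A` satisfies
`(μ - 1)² ≤ ‖A - I‖²`, so `μ ≥ 1/2`, and in the functional calculus of `A` we have
`P(X) = X A^{-1/2}` and `X A(X) = X (3/2 - A/2)`. Hence `P(X)ᵀP(X) = I`, so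
`h(P(X)) = f(P(X))`, while
`‖P(X) - X A(X)‖² = ∑ μ (μ^{-1/2} - 3/2 + μ/2)² ≤ ∑ (μ - 1)⁴ / 4 ≤ ‖A - I‖⁴ / 4`,
the middle step because `√μ (μ^{-1/2} - 3/2 + μ/2) = (√μ - 1)² (√μ + 2) / 2` and
`√μ + 2 ≤ (√μ + 1)²`. The Lipschitz bound `f(P(X)) ≤ f(X A(X)) + M₁ ‖P(X) - X A(X)‖`
concludes.
-/

open Matrix

attribute [local instance] Matrix.frobeniusNormedAddCommGroup Matrix.frobeniusNormedSpace

namespace ExPen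

noncomputable def finner {n p : ℕ} (A B : Matrix (Fin n) (Fin p) ℝ) : ℝ := (Aᵀ * B).trace

noncomputable def Phi {p : ℕ} (M : Matrix (Fin p) (Fin p) ℝ) : Matrix (Fin p) (Fin p) ℝ :=
  (1 / 2 : ℝ) • (M + Mᵀ)

noncomputable def Amap {n p : ℕ} (X : Matrix (Fin n) (Fin p) ℝ) : Matrix (Fin p) (Fin p) ℝ :=
  (3 / 2 : ℝ) • (1 : Matrix (Fin p) (Fin p) ℝ) - (1 / 2 : ℝ) • (Xᵀ * X)

noncomputable def g {n p : ℕ} (f : Matrix (Fin n) (Fin p) ℝ → ℝ)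
    (X : Matrix (Fin n) (Fin p) ℝ) : ℝ := f (X * Amap X)

noncomputable def hpen {n p : ℕ} (f : Matrix (Fin n) (Fin p) ℝ → ℝ) (β : ℝ)
    (X : Matrix (Fin n) (Fin p) ℝ) : ℝ := g f X + β / 4 * ‖Xᵀ * X - 1‖ ^ 2

noncomputable def dualCLM {n p : ℕ} (G : Matrix (Fin n) (Fin p) ℝ) :
    Matrix (Fin n) (Fin p) ℝ →L[ℝ] ℝ :=
  LinearMap.toContinuousLinearMap
    { toFun := fun D => (Gᵀ * D).trace
      map_add' := by intro D E; simp [Matrix.mul_add]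
      map_smul' := by intro c D; simp [Matrix.mul_smul] }

def HasGradAt {n p : ℕ} (φ : Matrix (Fin n) (Fin p) ℝ → ℝ)
    (X G : Matrix (Fin n) (Fin p) ℝ) : Prop :=
  HasFDerivAt φ (dualCLM G) X

noncomputable def specNorm {n p : ℕ} (X : Matrix (Fin n) (Fin p) ℝ) : ℝ :=
  ‖LinearMap.toContinuousLinearMap
    (Matrix.toEuclideanLin X : EuclideanSpace ℝ (Fin p) →ₗ[ℝ] EuclideanSpace ℝ (Fin n))‖

lemma posSemidef_tmul {n p : ℕ} (X : Matrix (Fin n) (Fin p) ℝ) : (Xᵀ * X).PosSemidef := by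
  simpa [Matrix.conjTranspose_eq_transpose_of_trivial] using
    Matrix.posSemidef_conjTranspose_mul_self X

noncomputable def psdSqrt {p : ℕ} {A : Matrix (Fin p) (Fin p) ℝ} (hA : A.PosSemidef) :
    Matrix (Fin p) (Fin p) ℝ :=
  hA.1.eigenvectorUnitary.1 * diagonal ((↑) ∘ (√·) ∘ hA.1.eigenvalues) *
  (star hA.1.eigenvectorUnitary : Matrix (Fin p) (Fin p) ℝ)

noncomputable def Pst {n p : ℕ} (X : Matrix (Fin n) (Fin p) ℝ) : Matrix (Fin n) (Fin p) ℝ :=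
  X * (psdSqrt (posSemidef_tmul X))⁻¹

lemma lipschitz_const_nonneg {E : Type*} [NormedAddCommGroup E] {f : E → ℝ} {M : ℝ}
    (hLip : ∀ A B, |f A - f B| ≤ M * ‖A - B‖) {A B : E} (hAB : A ≠ B) : 0 ≤ M :=
  nonneg_of_mul_nonneg_left ((abs_nonneg _).trans (hLip A B))
    (norm_pos_iff.mpr (sub_ne_zero.mpr hAB))

lemma mul_sq_inv_sqrt_sub_le {t : ℝ} (ht : 1 / 2 ≤ t) :
    t * ((√t)⁻¹ - (3 / 2 - 1 / 2 * t)) ^ 2 ≤ (t - 1) ^ 4 / 4 := by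
  obtain ⟨s, hs, rfl⟩ : ∃ s, 0 < s ∧ s ^ 2 = t :=
    ⟨√t, by positivity, Real.sq_sqrt (by linarith)⟩
  rw [Real.sqrt_sq hs.le]
  have hs2 : s + 2 ≤ (s + 1) ^ 2 := by nlinarith
  have hfactor : s * (s⁻¹ - (3 / 2 - 1 / 2 * s ^ 2)) = (s - 1) ^ 2 * (s + 2) / 2 := by
    field_simp; ring
  calc s ^ 2 * (s⁻¹ - (3 / 2 - 1 / 2 * s ^ 2)) ^ 2 = ((s - 1) ^ 2) ^ 2 * (s + 2) ^ 2 / 4 := by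
        rw [← mul_pow, hfactor]; ring
    _ ≤ ((s - 1) ^ 2) ^ 2 * ((s + 1) ^ 2) ^ 2 / 4 := by gcongr
    _ = (s ^ 2 - 1) ^ 4 / 4 := by ring

section SymmetricMatrix

variable {m n : Type*} [Fintype n]

lemma isHermitian_transpose_mul_self (X : Matrix n m ℝ) : (Xᵀ * X).IsHermitian := by
  simpa using X.isHermitian_conjTranspose_mul_self

variable [Fintype m]

lemma frobenius_norm_sq_eq_trace (B : Matrix m n ℝ) : ‖B‖ ^ 2 = (Bᵀ * B).trace := by
  rw [frobenius_norm_def, ← Real.rpow_natCast, ← Real.rpow_mul (by positivity)]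
  simp [Matrix.trace, Matrix.mul_apply, Finset.sum_comm (γ := m), sq]

variable [DecidableEq m]

lemma continuousOn_spectrum (A : Matrix m m ℝ) (f : ℝ → ℝ) :
    ContinuousOn f (spectrum ℝ A) :=
  A.finite_spectrum.continuousOn f

lemma transpose_cfc (f : ℝ → ℝ) (A : Matrix m m ℝ) : (cfc f A)ᵀ = cfc f A := by
  simpa [IsSelfAdjoint, Matrix.star_eq_conjTranspose] using
    (cfc_predicate f A : IsSelfAdjoint (cfc f A))

lemma trace_cfc {A : Matrix m m ℝ} (hA : A.IsHermitian) (f : ℝ → ℝ) :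
    (cfc f A).trace = ∑ i, f (hA.eigenvalues i) := by
  rw [hA.cfc_eq, Matrix.IsHermitian.cfc, Unitary.conjStarAlgAut_apply, Matrix.trace_mul_cycle,
    Unitary.coe_star_mul_self, Matrix.one_mul, Matrix.trace_diagonal]
  simp

lemma frobenius_norm_sq_sub_one {A : Matrix m m ℝ} (hA : A.IsHermitian) :
    ‖A - 1‖ ^ 2 = ∑ i, (hA.eigenvalues i - 1) ^ 2 := by
  have hcont := continuousOn_spectrum A
  have hcfc : A - 1 = cfc (fun t : ℝ => t - 1) A := by
    rw [cfc_sub _ _ A (hcont _) (hcont _), cfc_id' ℝ A, cfc_const_one ℝ A]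
  rw [frobenius_norm_sq_eq_trace, hcfc, transpose_cfc, ← cfc_mul _ _ A (hcont _) (hcont _),
    trace_cfc hA]
  simp [sq]

lemma sq_sub_one_le_of_mem_spectrum {A : Matrix m m ℝ} (hA : A.IsHermitian) {t : ℝ}
    (ht : t ∈ spectrum ℝ A) : (t - 1) ^ 2 ≤ ‖A - 1‖ ^ 2 := by
  obtain ⟨i, rfl⟩ := hA.spectrum_real_eq_range_eigenvalues ▸ ht
  rw [frobenius_norm_sq_sub_one hA]
  exact Finset.single_le_sum (f := fun i => (hA.eigenvalues i - 1) ^ 2)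
    (fun _ _ => sq_nonneg _) (Finset.mem_univ i)

lemma half_le_of_mem_spectrum {A : Matrix m m ℝ} (hA : A.IsHermitian) (h : ‖A - 1‖ ≤ 1 / 2)
    {t : ℝ} (ht : t ∈ spectrum ℝ A) : 1 / 2 ≤ t := by
  have := sq_sub_one_le_of_mem_spectrum hA ht
  nlinarith [norm_nonneg (A - 1)]

lemma transpose_mul_cfc_mul_mul_cfc (X : Matrix n m ℝ) (f : ℝ → ℝ) :
    (X * cfc f (Xᵀ * X))ᵀ * (X * cfc f (Xᵀ * X)) =
      cfc (fun t => f t * (t * f t)) (Xᵀ * X) := by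
  have hcont := continuousOn_spectrum (Xᵀ * X)
  rw [cfc_mul _ _ _ (hcont _) (hcont _), cfc_mul _ _ _ (hcont _) (hcont _),
    cfc_id' ℝ (Xᵀ * X) (isHermitian_transpose_mul_self X).isSelfAdjoint,
    Matrix.transpose_mul, transpose_cfc]
  simp only [Matrix.mul_assoc]

lemma frobenius_norm_sq_mul_cfc (X : Matrix n m ℝ) (f : ℝ → ℝ) :
    ‖X * cfc f (Xᵀ * X)‖ ^ 2 = ∑ i, (isHermitian_transpose_mul_self X).eigenvalues i *
      f ((isHermitian_transpose_mul_self X).eigenvalues i) ^ 2 := by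
  rw [frobenius_norm_sq_eq_trace, transpose_mul_cfc_mul_mul_cfc,
    trace_cfc (isHermitian_transpose_mul_self X)]
  congr 1; ext i; ring

end SymmetricMatrix

section Projection

variable {n p : ℕ}

lemma psdSqrt_eq_cfc (X : Matrix (Fin n) (Fin p) ℝ) :
    psdSqrt (posSemidef_tmul X) = cfc Real.sqrt (Xᵀ * X) := by
  rw [(posSemidef_tmul X).1.cfc_eq]
  rfl

lemma pst_eq_mul_cfc {X : Matrix (Fin n) (Fin p) ℝ}
    (hpos : ∀ t ∈ spectrum ℝ (Xᵀ * X), 0 < t) :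
    Pst X = X * cfc (fun t => (√t)⁻¹) (Xᵀ * X) := by
  have := (isHermitian_transpose_mul_self X).isSelfAdjoint
  have hcont := continuousOn_spectrum (Xᵀ * X)
  have hinv : cfc Real.sqrt (Xᵀ * X) * cfc (fun t => (√t)⁻¹) (Xᵀ * X) = 1 := by
    rw [← cfc_mul _ _ _ (hcont _) (hcont _), ← cfc_const_one ℝ (Xᵀ * X)]
    exact cfc_congr fun t ht => mul_inv_cancel₀ (Real.sqrt_pos.2 (hpos t ht)).ne'
  rw [Pst, psdSqrt_eq_cfc, Matrix.inv_eq_right_inv hinv]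

lemma transpose_pst_mul_pst {X : Matrix (Fin n) (Fin p) ℝ}
    (hpos : ∀ t ∈ spectrum ℝ (Xᵀ * X), 0 < t) : (Pst X)ᵀ * Pst X = 1 := by
  have := (isHermitian_transpose_mul_self X).isSelfAdjoint
  rw [pst_eq_mul_cfc hpos, transpose_mul_cfc_mul_mul_cfc, ← cfc_const_one ℝ (Xᵀ * X)]
  refine cfc_congr fun t ht => ?_
  have hsqrt : (√t) ^ 2 = t := Real.sq_sqrt (hpos t ht).le
  have : √t ≠ 0 := (Real.sqrt_pos.2 (hpos t ht)).ne'
  field_simp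
  exact hsqrt.symm

lemma amap_eq_cfc (X : Matrix (Fin n) (Fin p) ℝ) :
    Amap X = cfc (fun t : ℝ => 3 / 2 - 1 / 2 * t) (Xᵀ * X) := by
  have := (isHermitian_transpose_mul_self X).isSelfAdjoint
  have hcont := continuousOn_spectrum (Xᵀ * X)
  rw [cfc_sub _ _ _ (hcont _) (hcont _), cfc_const (3 / 2) (Xᵀ * X),
    cfc_const_mul_id (1 / 2) (Xᵀ * X), Amap, Algebra.algebraMap_eq_smul_one]

lemma pst_sub_mul_amap {X : Matrix (Fin n) (Fin p) ℝ}
    (hpos : ∀ t ∈ spectrum ℝ (Xᵀ * X), 0 < t) :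
    Pst X - X * Amap X = X * cfc (fun t => (√t)⁻¹ - (3 / 2 - 1 / 2 * t)) (Xᵀ * X) := by
  have hcont := continuousOn_spectrum (Xᵀ * X)
  rw [pst_eq_mul_cfc hpos, amap_eq_cfc, ← Matrix.mul_sub,
    cfc_sub (fun t => (√t)⁻¹) (fun t : ℝ => 3 / 2 - 1 / 2 * t) _ (hcont _) (hcont _)]

lemma norm_pst_sub_mul_amap_le {X : Matrix (Fin n) (Fin p) ℝ}
    (hX : ‖Xᵀ * X - 1‖ ≤ 1 / 2) :
    ‖Pst X - X * Amap X‖ ≤ ‖Xᵀ * X - 1‖ ^ 2 / 2 := by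
  have hA := isHermitian_transpose_mul_self X
  have hhalf : ∀ i, 1 / 2 ≤ hA.eigenvalues i := fun i =>
    half_le_of_mem_spectrum hA hX (hA.eigenvalues_mem_spectrum_real i)
  have hpos : ∀ t ∈ spectrum ℝ (Xᵀ * X), 0 < t := fun t ht =>
    lt_of_lt_of_le (by norm_num) (half_le_of_mem_spectrum hA hX ht)
  have hsq : ‖Pst X - X * Amap X‖ ^ 2 ≤ (‖Xᵀ * X - 1‖ ^ 2 / 2) ^ 2 := by
    calc ‖Pst X - X * Amap X‖ ^ 2
        = ∑ i, hA.eigenvalues i * ((√(hA.eigenvalues i))⁻¹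
            - (3 / 2 - 1 / 2 * hA.eigenvalues i)) ^ 2 := by
          rw [pst_sub_mul_amap hpos, frobenius_norm_sq_mul_cfc]
      _ ≤ ∑ i, ((hA.eigenvalues i - 1) ^ 2) ^ 2 / 4 := by
          gcongr with i
          rw [← pow_mul]
          exact mul_sq_inv_sqrt_sub_le (hhalf i)
      _ ≤ (∑ i, (hA.eigenvalues i - 1) ^ 2) ^ 2 / 4 := by
          rw [← Finset.sum_div]
          exact div_le_div_of_nonneg_right
            (Finset.sum_sq_le_sq_sum_of_nonneg fun i _ => sq_nonneg _) (by norm_num)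
      _ = (‖Xᵀ * X - 1‖ ^ 2 / 2) ^ 2 := by
          rw [frobenius_norm_sq_sub_one hA]; ring
  exact (pow_le_pow_iff_left₀ (norm_nonneg _) (by positivity) two_ne_zero).mp hsq

lemma hpen_eq_of_transpose_mul_self_eq_one (f : Matrix (Fin n) (Fin p) ℝ → ℝ) (β : ℝ)
    {Y : Matrix (Fin n) (Fin p) ℝ} (hY : Yᵀ * Y = 1) : hpen f β Y = f Y := by
  have hA : Amap Y = 1 := by rw [Amap, hY, ← sub_smul]; norm_num
  rw [hpen, g, hA, Matrix.mul_one, hY, sub_self, norm_zero]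
  ring

end Projection

theorem statement_12 {n p : ℕ} (f : Matrix (Fin n) (Fin p) ℝ → ℝ) (β M₁ : ℝ)
    (hLip : ∀ A B : Matrix (Fin n) (Fin p) ℝ, |f A - f B| ≤ M₁ * ‖A - B‖)
    (X : Matrix (Fin n) (Fin p) ℝ) (hX : ‖Xᵀ * X - 1‖ ≤ 1 / 6) :
    hpen f β (Pst X) ≤ hpen f β X - (β / 4 - M₁ / 2) * ‖Xᵀ * X - 1‖ ^ 2 := by
  have hX' : ‖Xᵀ * X - 1‖ ≤ 1 / 2 := hX.trans (by norm_num)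
  have hPP : (Pst X)ᵀ * Pst X = 1 := transpose_pst_mul_pst fun t ht =>
    lt_of_lt_of_le (by norm_num) (half_le_of_mem_spectrum (isHermitian_transpose_mul_self X) hX' ht)
  have hdist := norm_pst_sub_mul_amap_le hX'
  have hM : M₁ * ‖Pst X - X * Amap X‖ ≤ M₁ * (‖Xᵀ * X - 1‖ ^ 2 / 2) := by
    rcases eq_or_ne X 0 with rfl | hX0
    · -- `M₁` may be negative, but `Pst 0 = 0` is orthonormal only if `p = 0`,
      -- and then both sides vanish.
      have h10 : (1 : Matrix (Fin p) (Fin p) ℝ) = 0 := by simpa [Pst] using hPP.symm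
      simp [Pst, h10]
    · exact mul_le_mul_of_nonneg_left hdist (lipschitz_const_nonneg hLip hX0)
  calc hpen f β (Pst X) = f (Pst X) := hpen_eq_of_transpose_mul_self_eq_one f β hPP
    _ ≤ f (X * Amap X) + M₁ * ‖Pst X - X * Amap X‖ := by
        linarith [le_abs_self (f (Pst X) - f (X * Amap X)), hLip (Pst X) (X * Amap X)]
    _ ≤ f (X * Amap X) + M₁ * (‖Xᵀ * X - 1‖ ^ 2 / 2) := by gcongr
    _ = hpen f β X - (β / 4 - M₁ / 2) * ‖Xᵀ * X - 1‖ ^ 2 := by rw [hpen, g]; ring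

end ExPen
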